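/- arXiv:1702.08731 — 5 statements merged into one kernel-verified Lean document; each statement's English description precedes it below -/
import Mathlib

section
/- The map sending a pair of unit quaternions (l, r) to the linear map q ↦ l * q * r⁻¹ on the quaternions ℍ ≅ ℝ⁴ is a group homomorphism from the product of the group of unit quaternions with itself into the group of linear isometries of ℍ, and its kernel is exactly {(1,1), (-1,-1)}. -/
/-!
Since the norm of `ℍ` is multiplicative, `q ↦ l * q * r⁻¹` is a linear isometry for unit
quaternions `l`, `r`. If it is the identity, evaluating at `q = 1` gives `l = r`, and then `l`
commutes with every quaternion. Commuting with `j` and `k` kills the imaginary part of `l`, so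
`l` is a real number of absolute value one, i.e. `l = ±1`.
-/

open Metric Quaternion

section

variable (𝕜 : Type*) {A : Type*} [NormedField 𝕜] [NormedDivisionRing A]
  [NormedAlgebra 𝕜 A]

noncomputable def sphereMulLeftRight :
    (sphere (0 : A) 1 × sphere (0 : A) 1) →* (A ≃ₗᵢ[𝕜] A) where
  toFun p :=
    { (LinearEquiv.ofLinearMap (LinearMap.mulLeftRight 𝕜 ((p.1 : A), (p.2 : A)⁻¹))
        (LinearMap.mulLeftRight 𝕜 ((p.1 : A)⁻¹, (p.2 : A)))
        (by ext q; simp [mul_assoc, ne_zero_of_mem_unit_sphere])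
        (by ext q; simp [mul_assoc, ne_zero_of_mem_unit_sphere]) : A ≃ₗ[𝕜] A) with
      norm_map' q := by simp }
  map_one' := by ext q; simp
  map_mul' p p' := by ext q; simp [mul_assoc]

variable {𝕜}

@[simp]
theorem sphereMulLeftRight_apply (p : sphere (0 : A) 1 × sphere (0 : A) 1) (q : A) :
    sphereMulLeftRight 𝕜 p q = p.1 * q * (p.2 : A)⁻¹ :=
  rfl

theorem sphereMulLeftRight_eq_one_iff (p : sphere (0 : A) 1 × sphere (0 : A) 1) :
    sphereMulLeftRight 𝕜 p = 1 ↔ p.1 = p.2 ∧ ∀ q : A, Commute (p.1 : A) q := by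
  obtain ⟨l, r⟩ := p
  have hr : (r : A) ≠ 0 := ne_zero_of_mem_unit_sphere r
  simp only [LinearIsometryEquiv.ext_iff, sphereMulLeftRight_apply, LinearIsometryEquiv.coe_one,
    id_eq, mul_inv_eq_iff_eq_mul₀ hr]
  constructor
  · intro h
    have hlr : (l : A) = r := by simpa using h 1
    exact ⟨Subtype.ext hlr, fun q => by rw [Commute, SemiconjBy, h q, hlr]⟩
  · rintro ⟨rfl, hl⟩ q
    exact hl q

end

theorem Quaternion.im_eq_zero_of_forall_commute {x : ℍ[ℝ]} (h : ∀ q : ℍ[ℝ], Commute x q) :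
    x.im = 0 := by
  have hI (q : ℍ[ℝ]) := congrArg QuaternionAlgebra.imI (h q).eq
  have hJ (q : ℍ[ℝ]) := congrArg QuaternionAlgebra.imJ (h q).eq
  simp only [imI_mul, imJ_mul] at hI hJ
  -- `j` and `k` are plugged in only now: the `*_mul` simp lemmas do not fire on a structure literal.
  have hj := hI ⟨0, 0, 1, 0⟩
  have hk := hI ⟨0, 0, 0, 1⟩
  have hk' := hJ ⟨0, 0, 0, 1⟩
  dsimp at hj hk hk'
  ext <;> simp <;> linarith

theorem Quaternion.forall_commute_iff_of_norm_eq_one {x : ℍ[ℝ]} (hx : ‖x‖ = 1) :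
    (∀ q : ℍ[ℝ], Commute x q) ↔ x = 1 ∨ x = -1 := by
  constructor
  · intro h
    have hre : x = x.re := by simpa [im_eq_zero_of_forall_commute h] using (re_add_im x).symm
    rw [hre, norm_coe, Real.norm_eq_abs, abs_eq zero_le_one] at hx
    rcases hx with h1 | h1
    exacts [.inl (by rw [hre, h1, coe_one]), .inr (by rw [hre, h1, coe_neg, coe_one])]
  · rintro (rfl | rfl) q
    exacts [Commute.one_left q, Commute.neg_one_left q]

/-- The map sending a pair of unit quaternions `(l, r)` to `q ↦ l * q * r⁻¹` is a group
homomorphism from the product of the unit-quaternion group with itself into the group of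
linear isometric equivalences of `ℍ`, with kernel exactly `{(1,1), (-1,-1)}`. -/
theorem stmt_0 :
    ∃ φ : (Metric.sphere (0 : ℍ[ℝ]) 1 × Metric.sphere (0 : ℍ[ℝ]) 1) →*
        (ℍ[ℝ] ≃ₗᵢ[ℝ] ℍ[ℝ]),
      (∀ p : Metric.sphere (0 : ℍ[ℝ]) 1 × Metric.sphere (0 : ℍ[ℝ]) 1, ∀ q : ℍ[ℝ],
        φ p q = (p.1 : ℍ[ℝ]) * q * (p.2 : ℍ[ℝ])⁻¹) ∧
      (∀ p : Metric.sphere (0 : ℍ[ℝ]) 1 × Metric.sphere (0 : ℍ[ℝ]) 1,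
        p ∈ φ.ker ↔ ((p.1 : ℍ[ℝ]) = 1 ∧ (p.2 : ℍ[ℝ]) = 1) ∨
          ((p.1 : ℍ[ℝ]) = -1 ∧ (p.2 : ℍ[ℝ]) = -1)) := by
  refine ⟨sphereMulLeftRight ℝ, sphereMulLeftRight_apply, fun p => ?_⟩
  rw [MonoidHom.mem_ker, sphereMulLeftRight_eq_one_iff,
    forall_commute_iff_of_norm_eq_one (norm_eq_of_mem_sphere p.1), Subtype.ext_iff]
  constructor
  · rintro ⟨hlr, hl | hl⟩
    exacts [.inl ⟨hl, hlr ▸ hl⟩, .inr ⟨hl, hlr ▸ hl⟩]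
  · rintro (⟨hl, hr⟩ | ⟨hl, hr⟩)
    exacts [⟨hl.trans hr.symm, .inl hl⟩, ⟨hl.trans hr.symm, .inr hl⟩]
end

section
/- Let l and r be unit quaternions. There exists a nonzero quaternion q with l * q = q * r if and only if the real parts of l and r are equal. -/
/-!
Write `l = s + a` and `r = s + b` with `s` the common real part and `a`, `b` pure. Then
`l q = q r` amounts to `a q = q b`. Equal norms give `a² = -|a|² = -|b|² = b²`, a real and hence
central element, so `q = a u + u b` satisfies `a q = q b` for every `u`. It is nonzero for `u = 1`
unless `b = -a`, and then it is the commutator `a u - u a`, nonzero for a suitable `u` when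
`a ≠ 0` (if `a = 0` then `b = 0` and `q = 1` works). Conversely `r = q⁻¹ l q` has the same real part as `l`, since `re (x y) = re (y x)`.
-/

open Quaternion

theorem mul_add_mul_intertwines {A : Type*} [Ring A] {a b u : A} (hab : a * a = b * b)
    (hu : Commute (a * a) u) : a * (a * u + u * b) = (a * u + u * b) * b := by
  rw [mul_add, add_mul, ← mul_assoc, hu.eq, hab, mul_assoc, mul_assoc, add_comm]

namespace Quaternion

section CommRing

variable {R : Type*} [CommRing R]

theorem commute_im_mul_self (a u : ℍ[R]) : Commute (a.im * a.im) u := by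
  rw [← sq, im_sq]
  exact (coe_commute _ u).neg_left

theorem normSq_eq_re_sq_add_normSq_im (a : ℍ[R]) : normSq a = a.re ^ 2 + normSq a.im := by
  simp only [normSq_def', re_im, imI_im, imJ_im, imK_im]
  ring

theorem re_mul_comm (a b : ℍ[R]) : (a * b).re = (b * a).re := by
  simp only [re_mul]
  ring

theorem mul_eq_mul_iff_im_mul_eq_mul_im {l r : ℍ[R]} (hre : l.re = r.re) (q : ℍ[R]) :
    l * q = q * r ↔ l.im * q = q * r.im := by
  rw [← re_add_im l, ← re_add_im r, hre, add_mul, mul_add, coe_commutes, add_left_cancel_iff]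
  simp only [im_add, im_coe, zero_add, im_idem]

theorem exists_not_commute_of_im_ne_zero [IsAddTorsionFree R] {a : ℍ[R]} (ha : a.im ≠ 0) :
    ∃ u : ℍ[R], ¬Commute a u := by
  by_contra! h
  obtain ⟨i, hi⟩ : ∃ i : ℍ[R], i.re = 0 ∧ i.imI = 1 ∧ i.imJ = 0 ∧ i.imK = 0 :=
    ⟨⟨0, 1, 0, 0⟩, rfl, rfl, rfl, rfl⟩
  obtain ⟨j, hj⟩ : ∃ j : ℍ[R], j.re = 0 ∧ j.imI = 0 ∧ j.imJ = 1 ∧ j.imK = 0 :=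
    ⟨⟨0, 0, 1, 0⟩, rfl, rfl, rfl, rfl⟩
  have hai := (h i).eq
  have haj := (h j).eq
  simp only [Quaternion.ext_iff, re_mul, imI_mul, imJ_mul, imK_mul, hi, hj, mul_one, one_mul,
    mul_zero, zero_mul, sub_zero, add_zero, zero_add, zero_sub] at hai haj
  obtain ⟨-, -, haK, haJ⟩ := hai
  obtain ⟨-, -, -, haI⟩ := haj
  apply ha
  ext
  · rfl
  · exact self_eq_neg.mp haI
  · exact neg_eq_self.mp haJ
  · exact self_eq_neg.mp haK

theorem exists_mul_add_mul_ne_zero [IsAddTorsionFree R] {a : ℍ[R]} (b : ℍ[R]) (ha : a.im ≠ 0) :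
    ∃ u : ℍ[R], a * u + u * b ≠ 0 := by
  by_cases hab : a + b = 0
  · obtain ⟨u, hu⟩ := exists_not_commute_of_im_ne_zero ha
    refine ⟨u, ?_⟩
    rwa [eq_neg_of_add_eq_zero_right hab, mul_neg, ← sub_eq_add_neg, sub_ne_zero]
  · exact ⟨1, by rwa [mul_one, one_mul]⟩

end CommRing

section LinearOrderedField

variable {R : Type*} [Field R] [LinearOrder R] [IsStrictOrderedRing R]

theorem im_mul_self_eq_of_re_eq_of_normSq_eq {l r : ℍ[R]} (hre : l.re = r.re)
    (hn : normSq l = normSq r) : l.im * l.im = r.im * r.im := by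
  rw [← sq, ← sq, im_sq, im_sq, neg_inj, Quaternion.coe_inj]
  rwa [normSq_eq_re_sq_add_normSq_im l, normSq_eq_re_sq_add_normSq_im r, hre,
    add_right_inj] at hn

theorem re_eq_of_mul_eq_mul {l r q : ℍ[R]} (hq : q ≠ 0) (h : l * q = q * r) : l.re = r.re :=
  calc l.re = (q⁻¹ * (l * q)).re := by rw [re_mul_comm, mul_assoc, mul_inv_cancel₀ hq, mul_one]
    _ = r.re := by rw [h, ← mul_assoc, inv_mul_cancel₀ hq, one_mul]

theorem exists_ne_zero_mul_eq_mul_of_re_eq_of_normSq_eq {l r : ℍ[R]} (hre : l.re = r.re)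
    (hn : normSq l = normSq r) : ∃ q ≠ 0, l * q = q * r := by
  have hsq := im_mul_self_eq_of_re_eq_of_normSq_eq hre hn
  simp_rw [mul_eq_mul_iff_im_mul_eq_mul_im hre]
  rcases eq_or_ne l.im 0 with hl | hl
  · have hr : r.im = 0 := mul_self_eq_zero.mp (by rw [← hsq, hl, mul_zero])
    exact ⟨1, one_ne_zero, by rw [hl, hr, zero_mul, mul_zero]⟩
  · obtain ⟨u, hu⟩ := exists_mul_add_mul_ne_zero r.im (a := l.im) (by rwa [im_idem])
    exact ⟨_, hu, mul_add_mul_intertwines hsq (commute_im_mul_self l u)⟩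

theorem exists_ne_zero_mul_eq_mul_iff_re_eq {l r : ℍ[R]} (hn : normSq l = normSq r) :
    (∃ q ≠ 0, l * q = q * r) ↔ l.re = r.re :=
  ⟨fun ⟨_, hq, h⟩ => re_eq_of_mul_eq_mul hq h,
    fun hre => exists_ne_zero_mul_eq_mul_of_re_eq_of_normSq_eq hre hn⟩

end LinearOrderedField

end Quaternion

/-- For unit quaternions `l` and `r`, there exists a nonzero quaternion `q` with
`l * q = q * r` if and only if the real parts of `l` and `r` agree. -/
theorem stmt_3 (l r : ℍ[ℝ]) (hl : ‖l‖ = 1) (hr : ‖r‖ = 1) :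
    (∃ q : ℍ[ℝ], q ≠ 0 ∧ l * q = q * r) ↔ l.re = r.re :=
  exists_ne_zero_mul_eq_mul_iff_re_eq <| by
    rw [normSq_eq_norm_mul_self, normSq_eq_norm_mul_self, hl, hr]
end

section
/- Let a be a unit quaternion. The map T : ℍ → ℝ⁴ → ℍ given by T(q) = a * conj(q) * a is an ℝ-linear involution that fixes every element of the real span of a and equals -identity on the orthogonal complement of a. -/
open Quaternion

/-! For a unit quaternion `a` we have `a * star a = star a * a = 1`, so `T = T⁻¹` follows by
cancelling, and `T a = a`. If `⟪a, q⟫ = 0` then `a * star q` has zero real part, hence is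
skew: `a * star q = -(q * star a)`, and multiplying on the right by `a` gives `T q = -q`. -/

def axialReflection {A : Type*} [Mul A] [Star A] (a q : A) : A :=
  a * star q * a

section StarRing

variable {A : Type*}

theorem isLinearMap_axialReflection {R : Type*} [CommSemiring R] [StarRing R] [TrivialStar R]
    [Semiring A] [StarRing A] [Algebra R A] [StarModule R A] (a : A) :
    IsLinearMap R (axialReflection a) where
  map_add x y := by simp only [axialReflection, star_add, mul_add, add_mul]
  map_smul c x := by
    simp only [axialReflection, StarModule.star_smul, star_trivial, mul_smul_comm, smul_mul_assoc]

theorem axialReflection_axialReflection [Monoid A] [StarMul A] {a : A} (ha : a ∈ unitary A)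
    (q : A) : axialReflection a (axialReflection a q) = q := by
  simp only [axialReflection, star_mul, star_star]
  calc a * (star a * (q * star a)) * a = (a * star a) * q * (star a * a) := by
        simp only [mul_assoc]
    _ = q := by rw [Unitary.mul_star_self_of_mem ha, Unitary.star_mul_self_of_mem ha,
        one_mul, mul_one]

theorem axialReflection_smul_self {R : Type*} [CommSemiring R] [StarRing R] [TrivialStar R]
    [Semiring A] [StarRing A] [Algebra R A] [StarModule R A] {a : A} (ha : a ∈ unitary A)
    (c : R) : axialReflection a (c • a) = c • a := by
  simp only [axialReflection, StarModule.star_smul, star_trivial, mul_smul_comm, smul_mul_assoc,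
    Unitary.mul_star_self_of_mem ha, one_mul]

theorem axialReflection_eq_neg_of_mem_skewAdjoint [Ring A] [StarRing A] {a q : A}
    (ha : a ∈ unitary A) (hskew : a * star q ∈ skewAdjoint A) : axialReflection a q = -q := by
  rw [skewAdjoint.mem_iff, star_mul, star_star, eq_neg_iff_add_eq_zero, add_comm, ← eq_neg_iff_add_eq_zero] at hskew
  rw [axialReflection, hskew, neg_mul, mul_assoc, Unitary.star_mul_self_of_mem ha, mul_one]

end StarRing

namespace Quaternion

instance {R : Type*} [CommRing R] [StarRing R] [TrivialStar R] : StarModule R ℍ[R] :=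
  ⟨fun r a => (star_smul r a).trans (by rw [star_trivial r])⟩

theorem mem_unitary_of_norm_eq_one {a : ℍ[ℝ]} (ha : ‖a‖ = 1) : a ∈ unitary ℍ[ℝ] := by
  have hnormSq : normSq a = 1 := by rw [normSq_eq_norm_mul_self, ha, mul_one]
  exact ⟨by rw [star_mul_self, hnormSq, coe_one], by rw [self_mul_star, hnormSq, coe_one]⟩

theorem mul_star_mem_skewAdjoint_of_inner_eq_zero {a q : ℍ[ℝ]} (h : inner ℝ a q = 0) :
    a * star q ∈ skewAdjoint ℍ[ℝ] :=
  skewAdjoint.mem_iff.mpr <| star_eq_neg.mpr (by rwa [← inner_def])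

end Quaternion

/-- For a unit quaternion `a`, the map `T q = a * conj q * a` is an `ℝ`-linear involution
fixing every element of the real span of `a` and acting as `-id` on the orthogonal
complement of `a`: the axial reflection in the `a`-axis. -/
theorem stmt_6 (a : ℍ[ℝ]) (ha : ‖a‖ = 1) :
    IsLinearMap ℝ (fun q : ℍ[ℝ] => a * star q * a) ∧
      (∀ q : ℍ[ℝ], a * star (a * star q * a) * a = q) ∧
      (∀ c : ℝ, a * star (c • a) * a = c • a) ∧
      (∀ q : ℍ[ℝ], (inner ℝ a q : ℝ) = 0 → a * star q * a = -q) := by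
  have hunit := Quaternion.mem_unitary_of_norm_eq_one ha
  exact ⟨isLinearMap_axialReflection a, axialReflection_axialReflection hunit,
    axialReflection_smul_self hunit, fun q hq =>
      axialReflection_eq_neg_of_mem_skewAdjoint hunit
        (Quaternion.mul_star_mem_skewAdjoint_of_inner_eq_zero hq)⟩
end

section
/- Let l₁, l₂, r₁, r₂ be purely imaginary unit quaternions, and set N_m = {q ∈ ℍ : l_m * q = q * r_m} for m = 1, 2. If the real part of l₁ * l₂ differs from the real part of r₁ * r₂, then N₁ ∩ N₂ = {0}. -/
open Quaternion

lemma re_mul_comm_aux (a b : ℍ[ℝ]) : (a * b).re = (b * a).re := by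
  simp [Quaternion.re_mul]; ring

/-- Lemma 2 of the paper (one direction): if `l₁, l₂, r₁, r₂` are purely imaginary unit
quaternions and `Re (l₁ l₂) ≠ Re (r₁ r₂)`, then the invariant planes
`N_m = {q | l_m q = q r_m}` intersect only in `0`. -/
theorem stmt_11 (l₁ l₂ r₁ r₂ : ℍ[ℝ])
    (hl₁ : l₁.re = 0) (hl₂ : l₂.re = 0) (hr₁ : r₁.re = 0) (hr₂ : r₂.re = 0)
    (hnl₁ : ‖l₁‖ = 1) (hnl₂ : ‖l₂‖ = 1) (hnr₁ : ‖r₁‖ = 1) (hnr₂ : ‖r₂‖ = 1)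
    (hre : (l₁ * l₂).re ≠ (r₁ * r₂).re) :
    {q : ℍ[ℝ] | l₁ * q = q * r₁} ∩ {q : ℍ[ℝ] | l₂ * q = q * r₂} = {0} := by
  ext q
  simp only [Set.mem_inter_iff, Set.mem_setOf_eq, Set.mem_singleton_iff]
  constructor
  · rintro ⟨h1, h2⟩
    have key : (l₁ * l₂) * q = q * (r₁ * r₂) := by
      rw [mul_assoc, h2, ← mul_assoc, h1, mul_assoc]
    have key2 : ((l₁ * l₂) * (q * star q)).re = ((q * (r₁ * r₂)) * star q).re := by
      rw [← mul_assoc, key]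
    rw [Quaternion.self_mul_star] at key2
    have h3 : ((q * (r₁ * r₂)) * star q).re
        = (((Quaternion.normSq q : ℝ) : ℍ[ℝ]) * (r₁ * r₂)).re := by
      rw [re_mul_comm_aux, ← mul_assoc, Quaternion.star_mul_self]
    have hns : Quaternion.normSq q * (l₁ * l₂).re = Quaternion.normSq q * (r₁ * r₂).re := by
      have e1 : ((l₁ * l₂) * ((Quaternion.normSq q : ℝ) : ℍ[ℝ])).re
          = Quaternion.normSq q * (l₁ * l₂).re := by
        simp [Quaternion.re_mul]; ring
      have e2 : (((Quaternion.normSq q : ℝ) : ℍ[ℝ]) * (r₁ * r₂)).re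
          = Quaternion.normSq q * (r₁ * r₂).re := by
        simp [Quaternion.re_mul]
      rw [← e1, ← e2, key2, h3]
    have hq : Quaternion.normSq q = 0 := by
      by_contra h
      exact hre (mul_left_cancel₀ h hns)
    exact Quaternion.normSq_eq_zero.mp hq
  · rintro rfl
    simp
end

section
/- Let α ∈ ℝ, β₁ ∈ ℝ, β₂ > 0 with β₁ + β₂ > 0. Define s(θ) = (sin 4θ)^{(β₁+β₂)/(2β₂)} · (1 + cos 4θ)^{-β₁/(2β₂)} for θ ∈ (0, π/4), and S(θ) = ∫₀^θ s(u)/sin 4u du. If (r(t), θ(t)) solves r' = αr + r³(β₁ + β₂ cos 4θ), θ' = -β₂ r² sin 4θ with θ(t) ∈ (0, π/4) and r(t) > 0 on an interval, then the quantity r(t)² s(θ(t)) + (2α/β₂) S(θ(t)) is constant on that interval. -/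
/-!
The weight `s` is an integrating factor: it solves `β₂ sin 4θ · s' = 2 (β₁ + β₂ cos 4θ) s`, which
(using `sin² 4θ / (1 + cos 4θ) = 1 - cos 4θ`) is exactly what makes the cubic terms cancel in
`d/dt (r² s(θ)) = 2 r r' s(θ) + r² s'(θ) θ'`, leaving `2 α r² s(θ)`. Since `S' = s / sin 4θ`, the
term `(2α/β₂) S(θ)` has derivative `-2 α r² s(θ)`, so the sum has derivative zero on the interval.
-/

open Real Set

lemma sin_four_mul_pos {x : ℝ} (hx : x ∈ Ioo 0 (π / 4)) : 0 < sin (4 * x) :=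
  sin_pos_of_pos_of_lt_pi (by linarith [hx.1]) (by linarith [hx.2])

lemma one_add_cos_four_mul_pos {x : ℝ} (hx : x ∈ Ioo 0 (π / 4)) : 0 < 1 + cos (4 * x) := by
  have : cos π < cos (4 * x) :=
    cos_lt_cos_of_nonneg_of_le_pi (by linarith [hx.1]) le_rfl (by linarith [hx.2])
  linarith [cos_pi]

noncomputable def weight (β₁ β₂ x : ℝ) : ℝ :=
  sin (4 * x) ^ ((β₁ + β₂) / (2 * β₂)) * (1 + cos (4 * x)) ^ (-(β₁ / (2 * β₂)))

lemma hasDerivAt_weight (β₁ : ℝ) {β₂ x : ℝ} (hβ₂ : β₂ ≠ 0) (hx : x ∈ Ioo 0 (π / 4)) :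
    HasDerivAt (weight β₁ β₂)
      (2 * (β₁ + β₂ * cos (4 * x)) / (β₂ * sin (4 * x)) * weight β₁ β₂ x) x := by
  have hsin := sin_four_mul_pos hx
  have hcos := one_add_cos_four_mul_pos hx
  have h4x : HasDerivAt (fun y : ℝ => 4 * y) 4 x := by
    simpa using (hasDerivAt_id x).const_mul 4
  have hsin' := ((hasDerivAt_sin (4 * x)).comp x h4x).rpow_const
    (p := (β₁ + β₂) / (2 * β₂)) (Or.inl hsin.ne')
  have hcos' := (((hasDerivAt_cos (4 * x)).comp x h4x).const_add 1).rpow_const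
    (p := -(β₁ / (2 * β₂))) (Or.inl hcos.ne')
  refine (hsin'.mul hcos').congr_deriv ?_
  simp only [weight, Function.comp_apply]
  rw [rpow_sub_one hsin.ne', rpow_sub_one hcos.ne']
  have hsq := sin_sq (4 * x)
  field_simp
  linear_combination 4 * β₁ * hsq

lemma hasDerivAt_conservedQuantity {α β₁ β₂ : ℝ} (hβ₂ : β₂ ≠ 0) {r θ s S : ℝ → ℝ} {t : ℝ}
    (hsin : sin (4 * θ t) ≠ 0)
    (hr : HasDerivAt r (α * r t + r t ^ 3 * (β₁ + β₂ * cos (4 * θ t))) t)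
    (hθ : HasDerivAt θ (-β₂ * r t ^ 2 * sin (4 * θ t)) t)
    (hs : HasDerivAt s (2 * (β₁ + β₂ * cos (4 * θ t)) / (β₂ * sin (4 * θ t)) * s (θ t)) (θ t))
    (hS : HasDerivAt S (s (θ t) / sin (4 * θ t)) (θ t)) :
    HasDerivAt (fun t => r t ^ 2 * s (θ t) + 2 * α / β₂ * S (θ t)) 0 t := by
  refine (((hr.pow 2).mul (hs.comp t hθ)).add ((hS.comp t hθ).const_mul _)).congr_deriv ?_
  simp only [Function.comp_apply, Pi.pow_apply]
  field_simp
  ring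

theorem stmt_14_general (α β₁ β₂ : ℝ) (hβ₂ : 0 < β₂)
    (s S : ℝ → ℝ)
    (hs : ∀ θ ∈ Ioo 0 (π / 4),
      s θ = (Real.sin (4 * θ)) ^ ((β₁ + β₂) / (2 * β₂))
        * (1 + Real.cos (4 * θ)) ^ (-(β₁ / (2 * β₂))))
    (hS : ∀ θ ∈ Ioo 0 (π / 4), HasDerivAt S (s θ / Real.sin (4 * θ)) θ)
    (r θ : ℝ → ℝ) (t₀ t₁ : ℝ)
    (hr : ∀ t ∈ Ioo t₀ t₁, HasDerivAt r
      (α * r t + (r t) ^ 3 * (β₁ + β₂ * Real.cos (4 * θ t))) t)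
    (hθ : ∀ t ∈ Ioo t₀ t₁, HasDerivAt θ (-β₂ * (r t) ^ 2 * Real.sin (4 * θ t)) t)
    (hθmem : ∀ t ∈ Ioo t₀ t₁, θ t ∈ Ioo 0 (π / 4)) :
    ∀ a ∈ Ioo t₀ t₁, ∀ b ∈ Ioo t₀ t₁,
      (r a) ^ 2 * s (θ a) + (2 * α / β₂) * S (θ a)
        = (r b) ^ 2 * s (θ b) + (2 * α / β₂) * S (θ b) := by
  have hs' : ∀ x ∈ Ioo 0 (π / 4),
      HasDerivAt s (2 * (β₁ + β₂ * cos (4 * x)) / (β₂ * sin (4 * x)) * s x) x := by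
    intro x hx
    rw [hs x hx]
    exact (hasDerivAt_weight β₁ hβ₂.ne' hx).congr_of_eventuallyEq
      (Filter.eventuallyEq_of_mem (Ioo_mem_nhds hx.1 hx.2) hs)
  have hE : ∀ t ∈ Ioo t₀ t₁,
      HasDerivAt (fun t => r t ^ 2 * s (θ t) + 2 * α / β₂ * S (θ t)) 0 t := fun t ht =>
    hasDerivAt_conservedQuantity hβ₂.ne' (sin_four_mul_pos (hθmem t ht)).ne' (hr t ht) (hθ t ht)
      (hs' _ (hθmem t ht)) (hS _ (hθmem t ht))
  intro a ha b hb
  exact isOpen_Ioo.is_const_of_deriv_eq_zero isPreconnected_Ioo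
    (fun t ht => (hE t ht).differentiableAt.differentiableWithinAt) (fun t ht => (hE t ht).deriv)
    ha hb

/-- Conserved quantity for the polar form of the `D₄`-equivariant system
`ż = αz + β₁z²z̄ + β₂z̄³`: along trajectories `(r, θ)` with `θ ∈ (0, π/4)` and `r > 0`,
the quantity `r² s(θ) + (2α/β₂) S(θ)` is constant, where
`s(θ) = (sin 4θ)^((β₁+β₂)/(2β₂)) (1 + cos 4θ)^(-β₁/(2β₂))` and `S' = s(θ)/sin 4θ`. -/
theorem stmt_14 (α β₁ β₂ : ℝ) (hβ₂ : 0 < β₂) (hsum : 0 < β₁ + β₂)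
    (s S : ℝ → ℝ)
    (hs : ∀ θ ∈ Ioo 0 (π / 4),
      s θ = (Real.sin (4 * θ)) ^ ((β₁ + β₂) / (2 * β₂))
        * (1 + Real.cos (4 * θ)) ^ (-(β₁ / (2 * β₂))))
    (hS : ∀ θ ∈ Ioo 0 (π / 4), HasDerivAt S (s θ / Real.sin (4 * θ)) θ)
    (r θ : ℝ → ℝ) (t₀ t₁ : ℝ)
    (hr : ∀ t ∈ Ioo t₀ t₁, HasDerivAt r
      (α * r t + (r t) ^ 3 * (β₁ + β₂ * Real.cos (4 * θ t))) t)
    (hθ : ∀ t ∈ Ioo t₀ t₁, HasDerivAt θ (-β₂ * (r t) ^ 2 * Real.sin (4 * θ t)) t)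
    (hθmem : ∀ t ∈ Ioo t₀ t₁, θ t ∈ Ioo 0 (π / 4))
    (hrpos : ∀ t ∈ Ioo t₀ t₁, 0 < r t) :
    ∀ a ∈ Ioo t₀ t₁, ∀ b ∈ Ioo t₀ t₁,
      (r a) ^ 2 * s (θ a) + (2 * α / β₂) * S (θ a)
        = (r b) ^ 2 * s (θ b) + (2 * α / β₂) * S (θ b) :=
  stmt_14_general α β₁ β₂ hβ₂ s S hs hS r θ t₀ t₁ hr hθ hθmem
end
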